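/- For all positive integers T, t, the function g_{T,t} satisfies the (1/(C₃T))-PL condition with C₃ = 21344400/1083; that is, for every x ∈ ℝ^{Tt}, ‖∇g_{T,t}(x)‖² ≥ 2·(1083/(21344400·T))·(g_{T,t}(x) − inf g_{T,t}). -/

import Mathlib

/-- The `k`-th coordinate (1-indexed) of `x ∈ ℝ^d`, with out-of-range coordinates
(including the convention `x_0 = 0`) equal to `0`. -/
noncomputable def coord {d : ℕ} (x : EuclideanSpace ℝ (Fin d)) (k : ℕ) : ℝ :=
  if h : 1 ≤ k ∧ k ≤ d then x ⟨k - 1, by omega⟩ else 0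

/-- The piecewise scalar component `v_y` of the hard instance. -/
noncomputable def vFun (y x : ℝ) : ℝ :=
  if x ≤ 31 / 32 * y then x ^ 2 / 2
  else if x ≤ y then x ^ 2 / 2 - 16 * (x - 31 / 32 * y) ^ 2
  else if x ≤ 33 / 32 * y then x ^ 2 / 2 - y ^ 2 / 32 + 16 * (x - 33 / 32 * y) ^ 2
  else x ^ 2 / 2 - y ^ 2 / 32

/-- The quadratic (convex) part `q_{T,t}` of the hard instance, with the convention
`x_0 = 0` (encoded by `coord x 0 = 0`). -/
noncomputable def qFun (T t : ℕ) (x : EuclideanSpace ℝ (Fin (T * t))) : ℝ :=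
  (1 / 2) * ∑ i ∈ Finset.range t,
    ((7 / 8 * coord x (i * T) - coord x (i * T + 1)) ^ 2
      + ∑ j ∈ Finset.Icc 1 (T - 1), (coord x (i * T + j + 1) - coord x (i * T + j)) ^ 2)

/-- The reference vector `y ∈ ℝ^{Tt}` with `y_{qT+b} = (7/8)^q` for `b ∈ {1, …, T}`;
in 0-based indexing, `y i = (7/8)^(i / T)`. -/
noncomputable def yVec (T t : ℕ) : EuclideanSpace ℝ (Fin (T * t)) :=
  WithLp.toLp 2 (fun i => (7 / 8 : ℝ) ^ ((i : ℕ) / T))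

/-- The hard instance `g_{T,t}(x) = q_{T,t}(x) + Σ_{i=1}^{Tt} v_{y_i}(x_i)`. -/
noncomputable def gFun (T t : ℕ) (x : EuclideanSpace ℝ (Fin (T * t))) : ℝ :=
  qFun T t x + ∑ i : Fin (T * t), vFun (yVec T t i) (x i)


/-!
Put `x₀ = 0` and `d_k = x_k - c_k x_{k-1}`, where `c_k = 7/8` at the first index of each block of
length `T` and `c_k = 1` otherwise. Then `g = ½ Σ d_k² + Σ v_{y_k}(x_k) ≥ 0 = g(0)`, and
`∂_k g = d_k - c_{k+1} d_{k+1} + v'_{y_k}(x_k)` with `d_{Tt+1} = 0`. Summation by parts gives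
`Σ (d_k - c_{k+1} d_{k+1}) x_k = Σ d_k²`, which together with `v_y(x) ≤ x²/2` yields
`‖∇g‖² ≥ g - Y` for the defect `Y = Σ (v'_{y_k}(x_k) - x_k)²`. Since `v'_y(x) = x` off the trap
`(31y/32, 33y/32)`, only trapped coordinates contribute to `Y`.

If `Y ≤ 9g/10` we are done. Otherwise let `m` be the first trapped coordinate. As `y` decays
geometrically from block to block, `Y ≤ (64/15) T y_m²`. On the other hand some `|∂_k g|` exceeds
`y_m/40`. Otherwise, if `d_m ≥ y_m/4`, the chain is pushed above `33 y_m/32`, hence past all later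
traps, up to `k = Tt`, contradicting `d_{Tt+1} = 0`; and if `d_m < y_m/4`, the coordinates before
`m` stay above `23 y_m/32` down to `x₀ = 0`.
-/

open Finset Topology

theorem sum_Icc_one_eq_sum_range (n : ℕ) (f : ℕ → ℝ) :
    ∑ k ∈ Icc 1 n, f k = ∑ i ∈ range n, f (i + 1) := by
  rw [← Ico_add_one_right_eq_Icc, sum_Ico_eq_sum_range]
  simp [add_comm]

theorem sum_range_mul_eq_sum_sum (f : ℕ → ℝ) (N T : ℕ) :
    ∑ i ∈ range (N * T), f i = ∑ q ∈ range N, ∑ j ∈ range T, f (q * T + j) := by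
  induction N with
  | zero => simp
  | succ N ih => rw [Nat.succ_mul, sum_range_add, ih, sum_range_succ]

theorem sum_range_pow_div_le {T : ℕ} (hT : 0 < T) {r : ℝ} (hr0 : 0 ≤ r) (hr1 : r < 1) (N : ℕ) :
    ∑ i ∈ range N, r ^ (i / T) ≤ T / (1 - r) := by
  have hblock : ∀ q, ∑ j ∈ range T, r ^ ((q * T + j) / T) = T * r ^ q := fun q => by
    rw [sum_congr rfl fun j hj => ?_, sum_const, card_range, nsmul_eq_mul]
    rw [mul_comm, Nat.mul_add_div hT, Nat.div_eq_of_lt (mem_range.1 hj), add_zero]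
  calc ∑ i ∈ range N, r ^ (i / T)
      ≤ ∑ i ∈ range (N * T), r ^ (i / T) :=
        sum_le_sum_of_subset_of_nonneg (range_subset_range.2 (Nat.le_mul_of_pos_right N hT))
          fun _ _ _ => by positivity
    _ = T * ∑ q ∈ range N, r ^ q := by simp only [sum_range_mul_eq_sum_sum, hblock, mul_sum]
    _ ≤ T * (r ^ 0 / (1 - r)) := by
        gcongr
        rw [range_eq_Ico]
        exact geom_sum_Ico_le_of_lt_one hr0 hr1
    _ = T / (1 - r) := by ring

theorem sum_chain_by_parts {n : ℕ} {c a V : ℕ → ℝ} (hV : V 0 = 0) (ha : a (n + 1) = 0) :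
    ∑ k ∈ Icc 1 n, a k * (V k - c k * V (k - 1)) =
      ∑ k ∈ Icc 1 n, (a k - c (k + 1) * a (k + 1)) * V k := by
  rw [← sub_eq_zero, ← sum_sub_distrib, sum_Icc_one_eq_sum_range]
  have h := sum_range_sub (fun i => c (i + 1) * a (i + 1) * V i) n
  simp only [ha, hV, zero_mul, mul_zero, sub_zero] at h
  rw [← h]
  refine sum_congr rfl fun i _ => ?_
  simp only [Nat.add_sub_cancel]
  ring

theorem mul_le_max_zero {b c : ℝ} (hc0 : 0 ≤ c) (hc1 : c ≤ 1) : c * b ≤ max b 0 := by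
  rcases le_total 0 b with hb | hb
  · rw [max_eq_left hb]; nlinarith
  · rw [max_eq_right hb]; nlinarith

theorem hasDerivAt_max_zero_sq (x : ℝ) :
    HasDerivAt (fun z : ℝ => max z 0 ^ 2) (2 * max x 0) x := by
  refine hasDerivAt_of_hasDerivAt_of_ne' (f := fun z : ℝ => max z 0 ^ 2)
    (g := fun z => 2 * max z 0) (x := 0) (fun z hz => ?_) (by fun_prop) (by fun_prop) x
  rcases hz.lt_or_gt with hz | hz
  · have hloc : (fun w : ℝ => max w 0 ^ 2) =ᶠ[𝓝 z] fun _ => 0 :=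
      (gt_mem_nhds hz).mono fun w hw => by simp [max_eq_right hw.le]
    simpa [max_eq_right hz.le] using (hasDerivAt_const z (0 : ℝ)).congr_of_eventuallyEq hloc
  · have hloc : (fun w : ℝ => max w 0 ^ 2) =ᶠ[𝓝 z] fun w => w ^ 2 :=
      (lt_mem_nhds hz).mono fun w hw => by simp [max_eq_left hw.le]
    simpa [max_eq_left hz.le] using (hasDerivAt_pow 2 z).congr_of_eventuallyEq hloc

noncomputable section

section vFun

def vFunTrap (y : ℝ) : Set ℝ := Set.Ioo (31 / 32 * y) (33 / 32 * y)

def vFunDeriv (y x : ℝ) : ℝ :=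
  x - 32 * (max (x - 31 / 32 * y) 0 - 2 * max (x - y) 0 + max (x - 33 / 32 * y) 0)

variable {y x : ℝ}

theorem vFun_eq_ramp (hy : 0 ≤ y) (x : ℝ) : vFun y x = x ^ 2 / 2 -
    16 * (max (x - 31 / 32 * y) 0 ^ 2 - 2 * max (x - y) 0 ^ 2 + max (x - 33 / 32 * y) 0 ^ 2) := by
  simp only [vFun, max_def]
  split_ifs <;> first | (exfalso; linarith) | ring

theorem hasDerivAt_vFun (hy : 0 ≤ y) (x : ℝ) : HasDerivAt (vFun y) (vFunDeriv y x) x := by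
  have hramp : ∀ a, HasDerivAt (fun z => max (z - a) 0 ^ 2) (2 * max (x - a) 0) x := fun a =>
    (hasDerivAt_max_zero_sq (x - a)).comp_sub_const x a
  have h := ((hasDerivAt_pow 2 x).div_const 2).sub
    ((((hramp (31 / 32 * y)).sub ((hramp y).const_mul 2)).add (hramp (33 / 32 * y))).const_mul 16)
  refine (h.congr_deriv ?_).congr_of_eventuallyEq (.of_forall (vFun_eq_ramp hy))
  simp only [vFunDeriv]
  ring

theorem vFunDeriv_of_notMem (hy : 0 ≤ y) (hx : x ∉ vFunTrap y) : vFunDeriv y x = x := by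
  simp only [vFunTrap, Set.mem_Ioo, not_and_or, not_lt] at hx
  simp only [vFunDeriv, max_def]
  split_ifs <;> rcases hx with hx | hx <;> linarith

theorem vFunDeriv_nonneg (hx : 0 ≤ x) : 0 ≤ vFunDeriv y x := by
  simp only [vFunDeriv, max_def]
  split_ifs <;> linarith

theorem abs_vFunDeriv_sub_le (hy : 0 ≤ y) : |vFunDeriv y x - x| ≤ y := by
  rw [abs_le]
  simp only [vFunDeriv, max_def]
  constructor <;> split_ifs <;> linarith

theorem vFun_nonneg (hy : 0 ≤ y) : 0 ≤ vFun y x := by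
  simp only [vFun]
  split_ifs <;> nlinarith

theorem vFun_le (y x : ℝ) : vFun y x ≤ x ^ 2 / 2 := by
  simp only [vFun]
  split_ifs <;> nlinarith

theorem vFun_zero (hy : 0 ≤ y) : vFun y 0 = 0 := by
  simp [vFun, hy]

end vFun

section Chain

variable (n : ℕ) (c y X : ℕ → ℝ)

-- Zero past `n`, so that the successor term of `chainGrad n` vanishes at `k = n`.
def chainDiff (k : ℕ) : ℝ := if k ≤ n then X k - c k * X (k - 1) else 0

def chainEnergy : ℝ :=
  (1 / 2) * ∑ k ∈ Icc 1 n, chainDiff n c X k ^ 2 + ∑ k ∈ Icc 1 n, vFun (y k) (X k)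

def chainGrad (k : ℕ) : ℝ :=
  chainDiff n c X k - c (k + 1) * chainDiff n c X (k + 1) + vFunDeriv (y k) (X k)

variable {n c y X}

theorem chainDiff_of_le {k : ℕ} (hk : k ≤ n) : chainDiff n c X k = X k - c k * X (k - 1) :=
  if_pos hk

theorem chainDiff_succ_self : chainDiff n c X (n + 1) = 0 :=
  if_neg (Nat.not_succ_le_self n)

theorem chainEnergy_nonneg (hy : ∀ k, 0 ≤ y k) : 0 ≤ chainEnergy n c y X := by
  unfold chainEnergy
  have := sum_nonneg fun k (_ : k ∈ Icc 1 n) => vFun_nonneg (x := X k) (hy k)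
  positivity

theorem chainEnergy_zero (hy : ∀ k, 0 ≤ y k) : chainEnergy n c y 0 = 0 := by
  simp [chainEnergy, chainDiff, vFun_zero (hy _)]

theorem hasFDerivAt_chainEnergy {E : Type*} [NormedAddCommGroup E] [NormedSpace ℝ E]
    (L : ℕ → E →L[ℝ] ℝ) (hL : L 0 = 0) (hy : ∀ k, 0 ≤ y k) (x : E) :
    HasFDerivAt (fun z => chainEnergy n c y fun k => L k z)
      (∑ k ∈ Icc 1 n, chainGrad n c y (fun k => L k x) k • L k) x := by
  set X := fun k => L k x
  have hdiff : ∀ k ∈ Icc 1 n, HasFDerivAt (fun z => chainDiff n c (fun j => L j z) k ^ 2)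
      ((2 * chainDiff n c X k) • (L k - c k • L (k - 1))) x := fun k hk => by
    have h := ((L k - c k • L (k - 1)).hasFDerivAt (x := x)).pow 2
    simp only [sub_apply, smul_apply, smul_eq_mul] at h
    simp only [chainDiff_of_le (mem_Icc.1 hk).2]
    refine h.congr_fderiv ?_
    simp [X]
  have hv : ∀ k ∈ Icc 1 n, HasFDerivAt (fun z => vFun (y k) (L k z))
      (vFunDeriv (y k) (X k) • L k) x := fun k _ =>
    (hasDerivAt_vFun (hy k) (X k)).comp_hasFDerivAt x (L k).hasFDerivAt
  refine (((HasFDerivAt.fun_sum hdiff).const_mul (1 / 2)).add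
    (HasFDerivAt.fun_sum hv)).congr_fderiv ?_
  ext v
  have hparts := sum_chain_by_parts (n := n) (c := c) (a := chainDiff n c X)
    (V := fun k => L k v) (by simp [hL]) chainDiff_succ_self
  simp only [add_apply, smul_apply, _root_.sum_apply, sub_apply, smul_eq_mul] at hparts ⊢
  simp only [chainGrad, add_mul, sum_add_distrib, ← hparts, mul_sum]
  congr 1
  refine sum_congr rfl fun k _ => ?_
  ring

theorem chainEnergy_sub_le_sum_sq_chainGrad (hX : X 0 = 0) :
    chainEnergy n c y X - ∑ k ∈ Icc 1 n, (vFunDeriv (y k) (X k) - X k) ^ 2 ≤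
      ∑ k ∈ Icc 1 n, chainGrad n c y X k ^ 2 := by
  set d := chainDiff n c X
  have hpoint : ∀ k ∈ Icc 1 n, (d k - c (k + 1) * d (k + 1)) * X k + vFun (y k) (X k) -
      (vFunDeriv (y k) (X k) - X k) ^ 2 ≤ chainGrad n c y X k ^ 2 := fun k _ => by
    have := vFun_le (y k) (X k)
    simp only [chainGrad]
    nlinarith [sq_nonneg (d k - c (k + 1) * d (k + 1)),
      sq_nonneg (d k - c (k + 1) * d (k + 1) + 2 * vFunDeriv (y k) (X k) - X k)]
  have hparts : ∑ k ∈ Icc 1 n, (d k - c (k + 1) * d (k + 1)) * X k = ∑ k ∈ Icc 1 n, d k ^ 2 := by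
    rw [← sum_chain_by_parts hX chainDiff_succ_self]
    refine sum_congr rfl fun k hk => ?_
    rw [sq, ← chainDiff_of_le (mem_Icc.1 hk).2]
  have hsum := sum_le_sum hpoint
  rw [sum_sub_distrib, sum_add_distrib, hparts] at hsum
  have := sum_nonneg fun k (_ : k ∈ Icc 1 n) => sq_nonneg (d k)
  unfold chainEnergy
  linarith

theorem chainDiff_lt_of_abs_chainGrad_le (hc : ∀ k, 7 / 8 ≤ c k ∧ c k ≤ 1) (hy : Antitone y)
    (hy0 : ∀ k, 0 < y k) {m : ℕ} (hm : 1 ≤ m) (hmn : m ≤ n) (hXm : X m ∈ vFunTrap (y m))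
    (hu : ∀ k ∈ Icc 1 n, |chainGrad n c y X k| ≤ y m / 40) :
    chainDiff n c X m < y m / 4 := by
  by_contra! hdm
  set d := chainDiff n c X
  set p := fun k => vFunDeriv (y k) (X k)
  have hym := hy0 m
  have hstep : ∀ k, 1 ≤ k → k ≤ n → d k + p k - y m / 40 ≤ c (k + 1) * d (k + 1) :=
    fun k h1 h2 => by
      have := (abs_le.1 (hu k (mem_Icc.2 ⟨h1, h2⟩))).2
      simp only [chainGrad] at this
      linarith
  have hinv : ∀ k, m ≤ k → k ≤ n → y m / 4 ≤ d k + p k ∧ 31 / 32 * y m < X k := by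
    intro k hk
    induction k, hk using Nat.le_induction with
    | base =>
      have := vFunDeriv_nonneg (y := y m) (by linarith [hXm.1] : 0 ≤ X m)
      exact fun _ => ⟨by linarith, hXm.1⟩
    | succ k hmk ih =>
      intro hk
      obtain ⟨h1, h2⟩ := ih (by omega)
      have hd : 9 / 40 * y m ≤ d (k + 1) := by
        have := mul_le_max_zero (b := d (k + 1)) (by linarith [hc (k + 1)]) (hc (k + 1)).2
        have := hstep k (by omega) (by omega)
        rcases max_cases (d (k + 1)) 0 with h | h <;> linarith
      have hX : X (k + 1) = c (k + 1) * X k + d (k + 1) := by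
        simp only [d, chainDiff_of_le hk, Nat.add_sub_cancel]; ring
      have hXbig : 33 / 32 * y m ≤ X (k + 1) := by nlinarith [hc (k + 1)]
      have hp : p (k + 1) = X (k + 1) := by
        refine vFunDeriv_of_notMem (hy0 _).le fun h => ?_
        have := hy (show m ≤ k + 1 by omega)
        linarith [h.2]
      exact ⟨by linarith, by linarith⟩
  have h1 := (hinv n hmn le_rfl).1
  have := hstep n (by omega) le_rfl
  rw [show d (n + 1) = 0 from chainDiff_succ_self] at this
  linarith

theorem le_chainDiff_of_abs_chainGrad_le (hc : ∀ k, 7 / 8 ≤ c k ∧ c k ≤ 1)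
    (hy0 : ∀ k, 0 < y k) (hX0 : X 0 = 0) {m : ℕ} (hm : 1 ≤ m) (hmn : m ≤ n)
    (hXm : X m ∈ vFunTrap (y m)) (hmin : ∀ j, 1 ≤ j → j < m → X j ∉ vFunTrap (y j))
    (hu : ∀ k ∈ Icc 1 n, |chainGrad n c y X k| ≤ y m / 40) :
    y m / 4 ≤ chainDiff n c X m := by
  by_contra! hdm
  set d := chainDiff n c X
  have hym := hy0 m
  have hX : ∀ k, 1 ≤ k → k ≤ n → X k - d k = c k * X (k - 1) := fun k _ hk => by
    simp only [d, chainDiff_of_le hk]; ring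
  have hinv : ∀ j ≤ m, 1 ≤ j → d j < y m / 4 ∧ 23 / 32 * y m ≤ X j - d j := by
    intro j hj
    induction hj using Nat.decreasingInduction with
    | self => exact fun _ => ⟨hdm, by linarith [hXm.1]⟩
    | of_succ j hjm ih =>
      intro hj
      obtain ⟨h1, h2⟩ := ih (by omega)
      have hXj : 23 / 32 * y m ≤ X j := by
        have := mul_le_max_zero (b := X j) (by linarith [hc (j + 1)]) (hc (j + 1)).2
        have := hX (j + 1) (by omega) (by omega)
        simp only [Nat.add_sub_cancel] at this
        rcases max_cases (X j) 0 with h | h <;> linarith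
      have hcd := mul_le_max_zero (b := d (j + 1)) (by linarith [hc (j + 1)]) (hc (j + 1)).2
      have hu' := (abs_le.1 (hu j (mem_Icc.2 ⟨hj, by omega⟩))).2
      simp only [chainGrad, vFunDeriv_of_notMem (hy0 j).le (hmin j hj hjm)] at hu'
      have : d j < 0 := by rcases max_cases (d (j + 1)) 0 with h | h <;> linarith
      exact ⟨by linarith, by linarith⟩
  have h1 := (hinv 1 hm le_rfl).2
  rw [hX 1 le_rfl (by omega), Nat.sub_self, hX0, mul_zero] at h1
  linarith

theorem exists_lt_abs_chainGrad (hc : ∀ k, 7 / 8 ≤ c k ∧ c k ≤ 1) (hy : Antitone y)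
    (hy0 : ∀ k, 0 < y k) (hX0 : X 0 = 0) {m : ℕ} (hm : 1 ≤ m) (hmn : m ≤ n)
    (hXm : X m ∈ vFunTrap (y m)) (hmin : ∀ j, 1 ≤ j → j < m → X j ∉ vFunTrap (y j)) :
    ∃ k ∈ Icc 1 n, y m / 40 < |chainGrad n c y X k| := by
  by_contra! hu
  exact (chainDiff_lt_of_abs_chainGrad_le hc hy hy0 hm hmn hXm hu).not_ge
    (le_chainDiff_of_abs_chainGrad_le hc hy0 hX0 hm hmn hXm hmin hu)

end Chain

-- `c_k = 7/8` exactly at the first index `k = iT + 1` of a block, as in the term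
-- `(7/8) x_{iT} - x_{iT+1}` of `q_{T,t}`.
def blockCoeff (T k : ℕ) : ℝ := if T ∣ k - 1 then 7 / 8 else 1

def blockLevel (T k : ℕ) : ℝ := (7 / 8) ^ ((k - 1) / T)

section Block

variable {T : ℕ}

theorem blockCoeff_mem (T k : ℕ) : 7 / 8 ≤ blockCoeff T k ∧ blockCoeff T k ≤ 1 := by
  unfold blockCoeff; split_ifs <;> norm_num

theorem blockCoeff_mul_add_succ {q j : ℕ} (hj : j < T) :
    blockCoeff T (q * T + j + 1) = if j = 0 then 7 / 8 else 1 := by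
  have : T ∣ q * T + j ↔ j = 0 := by
    rw [Nat.dvd_add_right (dvd_mul_left T q)]
    exact ⟨fun h => Nat.eq_zero_of_dvd_of_lt h hj, fun h => h ▸ dvd_zero T⟩
  simp only [blockCoeff, Nat.add_sub_cancel, this]

theorem blockLevel_pos (T k : ℕ) : 0 < blockLevel T k := by
  unfold blockLevel; positivity

theorem blockLevel_antitone (T : ℕ) : Antitone (blockLevel T) := fun _ _ h =>
  pow_le_pow_of_le_one (by norm_num) (by norm_num) (Nat.div_le_div_right (by omega))

theorem blockLevel_add_sq_le {m : ℕ} (hm : 1 ≤ m) (i : ℕ) :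
    blockLevel T (m + i) ^ 2 ≤ blockLevel T m ^ 2 * (49 / 64) ^ (i / T) := by
  have h : (m - 1) / T + i / T ≤ (m + i - 1) / T :=
    Nat.div_add_div_le_add_div.trans (Nat.div_le_div_right (by omega))
  have hsq : ∀ a, ((7 / 8 : ℝ) ^ a) ^ 2 = (49 / 64) ^ a := fun a => by
    rw [← pow_mul, mul_comm, pow_mul]; norm_num
  rw [blockLevel, blockLevel, hsq, hsq, ← pow_add]
  exact pow_le_pow_of_le_one (by norm_num) (by norm_num) h

variable {n : ℕ} {c X : ℕ → ℝ}

theorem sum_sq_vFunDeriv_sub_le (hT : 0 < T) {m : ℕ} (hm : 1 ≤ m)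
    (hmin : ∀ j, 1 ≤ j → j < m → X j ∉ vFunTrap (blockLevel T j)) :
    ∑ k ∈ Icc 1 n, (vFunDeriv (blockLevel T k) (X k) - X k) ^ 2 ≤
      64 / 15 * T * blockLevel T m ^ 2 := by
  have hbefore : ∀ k ∈ Icc 1 n, k ∉ Icc m n →
      (vFunDeriv (blockLevel T k) (X k) - X k) ^ 2 = 0 := fun k hk hkm => by
    simp only [mem_Icc] at hk hkm
    rw [vFunDeriv_of_notMem (blockLevel_pos T k).le (hmin k hk.1 (by omega)), sub_self, sq,
      mul_zero]
  calc ∑ k ∈ Icc 1 n, (vFunDeriv (blockLevel T k) (X k) - X k) ^ 2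
      = ∑ k ∈ Icc m n, (vFunDeriv (blockLevel T k) (X k) - X k) ^ 2 :=
        (sum_subset (Icc_subset_Icc_left hm) hbefore).symm
    _ ≤ ∑ k ∈ Icc m n, blockLevel T k ^ 2 := sum_le_sum fun k _ => by
        have := abs_le.1 (abs_vFunDeriv_sub_le (x := X k) (blockLevel_pos T k).le)
        exact sq_le_sq' this.1 this.2
    _ = ∑ i ∈ range (n + 1 - m), blockLevel T (m + i) ^ 2 := by
        rw [← Ico_add_one_right_eq_Icc, sum_Ico_eq_sum_range]
    _ ≤ ∑ i ∈ range (n + 1 - m), blockLevel T m ^ 2 * (49 / 64) ^ (i / T) :=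
        sum_le_sum fun i _ => blockLevel_add_sq_le hm i
    _ ≤ blockLevel T m ^ 2 * (T / (1 - 49 / 64)) := by
        rw [← mul_sum]
        gcongr
        exact sum_range_pow_div_le hT (by norm_num) (by norm_num) _
    _ = 64 / 15 * T * blockLevel T m ^ 2 := by ring

theorem sum_sq_vFunDeriv_sub_le_sum_sq_chainGrad (hT : 0 < T) (hc : ∀ k, 7 / 8 ≤ c k ∧ c k ≤ 1)
    (hX0 : X 0 = 0) (htrap : ∃ k ∈ Icc 1 n, X k ∈ vFunTrap (blockLevel T k)) :
    ∑ k ∈ Icc 1 n, (vFunDeriv (blockLevel T k) (X k) - X k) ^ 2 ≤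
      20480 / 3 * T * ∑ k ∈ Icc 1 n, chainGrad n c (blockLevel T) X k ^ 2 := by
  classical
  obtain ⟨hm, hXm⟩ := Nat.find_spec htrap
  set m := Nat.find htrap
  have hmin : ∀ j, 1 ≤ j → j < m → X j ∉ vFunTrap (blockLevel T j) := fun j hj hjm hXj =>
    Nat.find_min htrap hjm ⟨mem_Icc.2 ⟨hj, by linarith [(mem_Icc.1 hm).2]⟩, hXj⟩
  obtain ⟨k, hk, hu⟩ := exists_lt_abs_chainGrad hc (blockLevel_antitone T) (blockLevel_pos T)
    hX0 (mem_Icc.1 hm).1 (mem_Icc.1 hm).2 hXm hmin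
  have hG : (blockLevel T m / 40) ^ 2 ≤ ∑ k ∈ Icc 1 n, chainGrad n c (blockLevel T) X k ^ 2 :=
    calc (blockLevel T m / 40) ^ 2 ≤ chainGrad n c (blockLevel T) X k ^ 2 := by
          rw [← sq_abs (chainGrad _ _ _ _ _)]
          exact pow_le_pow_left₀ (by linarith [blockLevel_pos T m]) hu.le 2
      _ ≤ _ := single_le_sum (fun j _ => sq_nonneg (chainGrad n c (blockLevel T) X j)) hk
  have hY := sum_sq_vFunDeriv_sub_le hT (n := n) (mem_Icc.1 hm).1 hmin
  have hT0 : (0 : ℝ) ≤ T := T.cast_nonneg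
  nlinarith

theorem chainEnergy_PL (hT : 0 < T) (hc : ∀ k, 7 / 8 ≤ c k ∧ c k ≤ 1) (hX0 : X 0 = 0) :
    2 * (1083 / (21344400 * (T : ℝ))) * chainEnergy n c (blockLevel T) X ≤
      ∑ k ∈ Icc 1 n, chainGrad n c (blockLevel T) X k ^ 2 := by
  set E := chainEnergy n c (blockLevel T) X
  set Y := ∑ k ∈ Icc 1 n, (vFunDeriv (blockLevel T k) (X k) - X k) ^ 2
  have hE : 0 ≤ E := chainEnergy_nonneg fun k => (blockLevel_pos T k).le
  have hEY : E - Y ≤ _ := chainEnergy_sub_le_sum_sq_chainGrad hX0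
  have hT1 : (1 : ℝ) ≤ T := by exact_mod_cast hT
  have hμ : 2 * (1083 / (21344400 * (T : ℝ))) = 1083 / 10672200 / T := by
    field_simp; ring
  rw [hμ, div_mul_eq_mul_div, div_le_iff₀ (by positivity)]
  by_cases hY : Y ≤ 9 / 10 * E
  · nlinarith
  · have htrap : ∃ k ∈ Icc 1 n, X k ∈ vFunTrap (blockLevel T k) := by
      by_contra! hnone
      have : Y = 0 := sum_eq_zero fun k hk => by
        rw [vFunDeriv_of_notMem (blockLevel_pos T k).le (hnone k hk), sub_self, sq, mul_zero]
      linarith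
    have := sum_sq_vFunDeriv_sub_le_sum_sq_chainGrad hT hc hX0 htrap
    nlinarith

end Block

section Euclidean

variable {d : ℕ}

theorem coord_index_zero (x : EuclideanSpace ℝ (Fin d)) : coord x 0 = 0 := by
  simp [coord]

theorem coord_succ (x : EuclideanSpace ℝ (Fin d)) (i : Fin d) : coord x (i + 1) = x i := by
  simp [coord]

theorem coord_zero : coord (0 : EuclideanSpace ℝ (Fin d)) = 0 := by
  funext k; simp [coord]

theorem sum_fin_eq_sum_Icc (f : ℕ → ℝ) : ∑ i : Fin d, f (i + 1) = ∑ k ∈ Icc 1 d, f k := by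
  rw [Fin.sum_univ_eq_sum_range (fun i => f (i + 1)), sum_Icc_one_eq_sum_range]

def coordCLM (d k : ℕ) : EuclideanSpace ℝ (Fin d) →L[ℝ] ℝ :=
  if h : 1 ≤ k ∧ k ≤ d then EuclideanSpace.proj (⟨k - 1, by omega⟩ : Fin d) else 0

theorem coordCLM_apply (k : ℕ) (x : EuclideanSpace ℝ (Fin d)) :
    coordCLM d k x = coord x k := by
  unfold coordCLM coord
  split_ifs <;> rfl

theorem coordCLM_zero : coordCLM d 0 = 0 := by
  simp [coordCLM]

end Euclidean

section gFun

variable {T t : ℕ}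

theorem qFun_eq_sum_sq_chainDiff (hT : 0 < T) (x : EuclideanSpace ℝ (Fin (T * t))) :
    qFun T t x =
      (1 / 2) * ∑ k ∈ Icc 1 (T * t), chainDiff (T * t) (blockCoeff T) (coord x) k ^ 2 := by
  rw [qFun, sum_Icc_one_eq_sum_range, show range (T * t) = range (t * T) by rw [Nat.mul_comm],
    sum_range_mul_eq_sum_sum]
  congr 1
  refine sum_congr rfl fun q hq => ?_
  have hbound : ∀ j < T, q * T + j + 1 ≤ T * t := fun j hj => by
    have := mem_range.1 hq
    nlinarith
  obtain ⟨S, rfl⟩ : ∃ S, T = S + 1 := ⟨T - 1, by omega⟩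
  rw [sum_range_succ', sum_Icc_one_eq_sum_range, add_comm, Nat.add_sub_cancel]
  congr 1
  · refine sum_congr rfl fun j hj => ?_
    have hj := mem_range.1 hj
    rw [chainDiff_of_le (hbound (j + 1) (by omega)), blockCoeff_mul_add_succ (by omega)]
    simp only [Nat.add_sub_cancel, add_eq_zero, one_ne_zero, and_false, if_false, one_mul]
  · rw [chainDiff_of_le (hbound 0 (by omega)), blockCoeff_mul_add_succ (j := 0) (by omega)]
    simp only [if_pos, add_zero, Nat.add_sub_cancel]
    ring

theorem gFun_eq_chainEnergy (hT : 0 < T) (x : EuclideanSpace ℝ (Fin (T * t))) :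
    gFun T t x = chainEnergy (T * t) (blockCoeff T) (blockLevel T) (coord x) := by
  rw [gFun, qFun_eq_sum_sq_chainDiff hT, chainEnergy,
    ← sum_fin_eq_sum_Icc fun k => vFun (blockLevel T k) (coord x k)]
  congr 1
  refine sum_congr rfl fun i _ => ?_
  simp [coord_succ, blockLevel, yVec]

theorem hasGradientAt_gFun (hT : 0 < T) (x : EuclideanSpace ℝ (Fin (T * t))) :
    HasGradientAt (gFun T t) (WithLp.toLp 2 fun i =>
      chainGrad (T * t) (blockCoeff T) (blockLevel T) (coord x) (i + 1)) x := by
  have h := hasFDerivAt_chainEnergy (n := T * t) (c := blockCoeff T) (coordCLM (T * t))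
    coordCLM_zero (fun k => (blockLevel_pos T k).le) x
  simp only [coordCLM_apply] at h
  rw [hasGradientAt_iff_hasFDerivAt, funext (gFun_eq_chainEnergy hT)]
  refine h.congr_fderiv ?_
  ext v
  simp [PiLp.inner_apply, coordCLM_apply, ← sum_fin_eq_sum_Icc, coord_succ, mul_comm]

theorem norm_sq_gradient_gFun (hT : 0 < T) (x : EuclideanSpace ℝ (Fin (T * t))) :
    ‖gradient (gFun T t) x‖ ^ 2 =
      ∑ k ∈ Icc 1 (T * t), chainGrad (T * t) (blockCoeff T) (blockLevel T) (coord x) k ^ 2 := by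
  simp [(hasGradientAt_gFun hT x).gradient, EuclideanSpace.norm_sq_eq, ← sum_fin_eq_sum_Icc]

theorem iInf_gFun_eq_zero (hT : 0 < T) : ⨅ z : EuclideanSpace ℝ (Fin (T * t)), gFun T t z = 0 := by
  have hy : ∀ k, 0 ≤ blockLevel T k := fun k => (blockLevel_pos T k).le
  refine IsLeast.csInf_eq ⟨⟨0, ?_⟩, Set.forall_mem_range.2 fun z => ?_⟩
  · show gFun T t 0 = 0
    rw [gFun_eq_chainEnergy hT, coord_zero, chainEnergy_zero hy]
  · rw [gFun_eq_chainEnergy hT]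
    exact chainEnergy_nonneg hy

end gFun

end

theorem gFun_PL_general (T t : ℕ) (hT : 0 < T)
    (x : EuclideanSpace ℝ (Fin (T * t))) :
    ‖gradient (gFun T t) x‖ ^ 2 ≥
      2 * (1083 / (21344400 * (T : ℝ))) *
        (gFun T t x - ⨅ z : EuclideanSpace ℝ (Fin (T * t)), gFun T t z) := by
  rw [iInf_gFun_eq_zero hT, sub_zero, norm_sq_gradient_gFun hT, gFun_eq_chainEnergy hT]
  exact chainEnergy_PL hT (blockCoeff_mem T) (coord_index_zero x)

/-- For all positive `T, t`, `g_{T,t}` satisfies the `(1/(C₃T))`-PL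
condition with `C₃ = 21344400/1083`. -/
theorem gFun_PL (T t : ℕ) (hT : 0 < T) (ht : 0 < t)
    (x : EuclideanSpace ℝ (Fin (T * t))) :
    ‖gradient (gFun T t) x‖ ^ 2 ≥
      2 * (1083 / (21344400 * (T : ℝ))) *
        (gFun T t x - ⨅ z : EuclideanSpace ℝ (Fin (T * t)), gFun T t z) :=
  gFun_PL_general T t hT x
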